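/- arXiv:2401.03840 — 3 statements merged into one kernel-verified Lean document; each statement's English description precedes it below -/
import Mathlib

section
/- Let (X, μ) be a measure space with μ a non-atomic positive measure, let g : X → [0,∞) be in L¹(X,μ) ∩ L²(X,μ), and let 0 < γ ≤ ∫_X g dμ. Then for every measurable v ≥ 0 with ∫_X v dμ = γ, one has ∫_X (v − g)² dμ ≥ ∫_X (max{λ + g, 0} − g)² dμ, where λ ∈ (−∞, 0] is chosen so that ∫_X max{λ + g, 0} dμ = γ. -/
open MeasureTheory

/- Over `w ≥ 0`, the functional `(w - g)² - 2λw = (w - (λ + g))² - 2λg - λ²` is minimised pointwise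
by the projection `u = max (λ + g) 0` of `λ + g` onto `[0, ∞)`. After integration the linear terms
cancel: both equal `-2λγ`, which is nonnegative because `λ ≤ 0`, so they can be moved freely
between the sides of an inequality of `ℝ≥0∞`-valued integrals. -/

theorem sq_max_zero_sub_le_sq_sub {c w : ℝ} (hw : 0 ≤ w) : (max c 0 - c) ^ 2 ≤ (w - c) ^ 2 := by
  rcases le_total 0 c with hc | hc
  · simpa [max_eq_left hc] using sq_nonneg (w - c)
  · rw [max_eq_right hc]
    nlinarith

theorem sq_max_add_zero_sub_add_mul_le {lam g w : ℝ} (hw : 0 ≤ w) :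
    (max (lam + g) 0 - g) ^ 2 + (-2 * lam) * max (lam + g) 0 ≤ (w - g) ^ 2 + (-2 * lam) * w := by
  linear_combination sq_max_zero_sub_le_sq_sub (c := lam + g) hw

theorem lintegral_ofReal_le_of_add_le_add {X : Type*} [MeasurableSpace X] {μ : Measure X}
    {f₁ f₂ p₁ p₂ : X → ℝ} (hf₁ : 0 ≤ᵐ[μ] f₁) (hp₁ : 0 ≤ᵐ[μ] p₁) (hp₂ : 0 ≤ᵐ[μ] p₂)
    (hp₁_int : Integrable p₁ μ) (hp₂_int : Integrable p₂ μ) (hp : ∫ x, p₁ x ∂μ = ∫ x, p₂ x ∂μ)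
    (h : ∀ᵐ x ∂μ, f₁ x + p₁ x ≤ f₂ x + p₂ x) :
    ∫⁻ x, ENNReal.ofReal (f₁ x) ∂μ ≤ ∫⁻ x, ENNReal.ofReal (f₂ x) ∂μ := by
  have hsum : ∫⁻ x, ENNReal.ofReal (f₁ x) ∂μ + ∫⁻ x, ENNReal.ofReal (p₁ x) ∂μ ≤
      ∫⁻ x, ENNReal.ofReal (f₂ x) ∂μ + ∫⁻ x, ENNReal.ofReal (p₂ x) ∂μ := by
    rw [← lintegral_add_right' _ hp₁_int.aemeasurable.ennreal_ofReal,
      ← lintegral_add_right' _ hp₂_int.aemeasurable.ennreal_ofReal]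
    refine lintegral_mono_ae ?_
    filter_upwards [hf₁, hp₁, h] with x hf₁x hp₁x hx
    rw [← ENNReal.ofReal_add hf₁x hp₁x]
    exact (ENNReal.ofReal_le_ofReal hx).trans ENNReal.ofReal_add_le
  rw [← ofReal_integral_eq_lintegral_ofReal hp₁_int hp₁,
    ← ofReal_integral_eq_lintegral_ofReal hp₂_int hp₂, hp] at hsum
  exact (ENNReal.add_le_add_iff_right ENNReal.ofReal_ne_top).mp hsum

theorem stmt2_general {X : Type*} [MeasurableSpace X] (μ : Measure X)
    (g : X → ℝ) (hg0 : ∀ x, 0 ≤ g x)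
    (hg1 : Integrable g μ)
    (γ : ℝ) (hγpos : 0 < γ)
    (lam : ℝ) (hlam : lam ≤ 0)
    (hconstraint : ∫ x, max (lam + g x) 0 ∂μ = γ)
    (v : X → ℝ) (hv0 : ∀ x, 0 ≤ v x)
    (hvint : ∫ x, v x ∂μ = γ) :
    ∫⁻ x, ENNReal.ofReal ((v x - g x) ^ 2) ∂μ ≥
      ∫⁻ x, ENNReal.ofReal ((max (lam + g x) 0 - g x) ^ 2) ∂μ := by
  set u : X → ℝ := fun x => max (lam + g x) 0
  have hu_int : Integrable u μ :=
    hg1.mono' ((hg1.aemeasurable.const_add lam).max aemeasurable_const).aestronglyMeasurable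
      (ae_of_all _ fun x => by
        rw [Real.norm_of_nonneg (le_max_right _ _)]
        exact max_le (by linarith [hg0 x]) (hg0 x))
  have hv_int : Integrable v μ := by
    by_contra h
    rw [integral_undef h] at hvint
    exact hγpos.ne hvint
  have hc : 0 ≤ -2 * lam := by linarith
  refine lintegral_ofReal_le_of_add_le_add (ae_of_all _ fun x => sq_nonneg _)
    (ae_of_all _ fun x => mul_nonneg hc (le_max_right _ _))
    (ae_of_all _ fun x => mul_nonneg hc (hv0 x)) (hu_int.const_mul _) (hv_int.const_mul _)
    ?_ (ae_of_all _ fun x => sq_max_add_zero_sub_add_mul_le (hv0 x))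
  rw [integral_const_mul, integral_const_mul, hconstraint, hvint]

theorem stmt2 {X : Type*} [MeasurableSpace X] (μ : Measure X) [NullSingletonClass μ]
    (g : X → ℝ) (hg0 : ∀ x, 0 ≤ g x)
    (hg1 : Integrable g μ) (hg2 : MemLp g 2 μ)
    (γ : ℝ) (hγpos : 0 < γ) (hγle : γ ≤ ∫ x, g x ∂μ)
    (lam : ℝ) (hlam : lam ≤ 0)
    (hconstraint : ∫ x, max (lam + g x) 0 ∂μ = γ)
    (v : X → ℝ) (hvmeas : AEMeasurable v μ) (hv0 : ∀ x, 0 ≤ v x)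
    (hvint : ∫ x, v x ∂μ = γ) :
    ∫⁻ x, ENNReal.ofReal ((v x - g x) ^ 2) ∂μ ≥
      ∫⁻ x, ENNReal.ofReal ((max (lam + g x) 0 - g x) ^ 2) ∂μ :=
  stmt2_general μ g hg0 hg1 γ hγpos lam hlam hconstraint v hv0 hvint
end

section
/- Let F : {bounded open subsets of ℝ^{N−1} with ℋ^{N−1}-null boundary} → [0,∞) satisfy: translation invariance F(x' + ω) = F(ω); monotonicity F(ω₁) ≤ F(ω₂) for ω₁ ⊂ ω₂; superadditivity F(ω₁) + F(ω₂) ≤ F(ω₁ ∪ ω₂) for disjoint ω₁, ω₂; and the scaling F(αω) = α^{N−1} F(ω) for all α > 0. Then F(ω) = ℋ^{N−1}(ω) · F(Q') for every such ω, where Q' is the open unit cube of ℝ^{N−1}. -/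
open MeasureTheory Pointwise

/-- A "good" set: bounded, open, with `ℋ^{n}`-null (i.e. Lebesgue-null)
topological boundary, in the `n`-dimensional Euclidean space. -/
def GoodSet (n : ℕ) (ω : Set (EuclideanSpace ℝ (Fin n))) : Prop :=
  Bornology.IsBounded ω ∧ IsOpen ω ∧ volume (frontier ω) = 0

/-!
On a ball, translation invariance and homogeneity give `F (ball x r) = κ * |ball x r|` with
`κ = F (ball 0 1) / |ball 0 1|`. By Besicovitch's covering theorem, an open set of finite measure
contains finitely many disjoint balls filling it up to measure `ε`; superadditivity and
monotonicity then give `κ * |ω| ≤ F ω`. Packing balls in the same way into `ball 0 M \ closure ω`,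
whose measure is `|ball 0 M| - |ω|` because `∂ω` is null, and applying superadditivity to `ω` and
these balls gives `F ω ≤ κ * |ω|`. For the unit cube this reads `F Q' = κ`.
-/

open Metric ENNReal

theorem exists_finset_disjoint_closedBall_measure_le_sum_add {α : Type*} [MetricSpace α]
    [SecondCountableTopology α] [MeasurableSpace α] [OpensMeasurableSpace α]
    [HasBesicovitchCovering α] (μ : Measure α) [SFinite μ] {U : Set α} (hU : IsOpen U)
    (hμU : μ U ≠ ∞) {ε : ℝ≥0∞} (hε : ε ≠ 0) :
    ∃ (s : Finset α) (r : α → ℝ), (∀ x ∈ s, 0 < r x ∧ closedBall x (r x) ⊆ U) ∧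
      (s : Set α).PairwiseDisjoint (fun x => closedBall x (r x)) ∧
      μ U ≤ ∑ x ∈ s, μ (closedBall x (r x)) + ε := by
  have small_balls : ∀ x ∈ U, ∀ δ > 0, ({r | closedBall x r ⊆ U} ∩ Set.Ioo 0 δ).Nonempty := by
    intro x hx δ hδ
    obtain ⟨η, hη, hηU⟩ := nhds_basis_closedBall.mem_iff.1 (hU.mem_nhds hx)
    exact ⟨min η (δ / 2), (closedBall_subset_closedBall (min_le_left _ _)).trans hηU,
      by positivity, (min_le_right _ _).trans_lt (half_lt_self hδ)⟩
  obtain ⟨t, r, ht, -, hr, hnull, hdisj⟩ := Besicovitch.exists_disjoint_closedBall_covering_ae μ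
    (fun x => {r | closedBall x r ⊆ U}) U small_balls (fun _ => 1) (fun _ _ => one_pos)
  rcases eq_or_ne (μ U) 0 with h0 | h0
  · exact ⟨∅, r, by simp, by simp, by simp [h0]⟩
  have hcover : μ U ≤ ∑' x : t, μ (closedBall x (r x)) := by
    rw [← measure_biUnion ht hdisj fun _ _ => measurableSet_closedBall]
    exact measure_mono_ae (ae_le_set.2 hnull)
  have hlt := (ENNReal.sub_lt_self hμU h0 hε).trans_le hcover
  rw [ENNReal.tsum_eq_iSup_sum] at hlt
  obtain ⟨u, hu⟩ := lt_iSup_iff.1 hlt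
  refine ⟨u.map (Function.Embedding.subtype _), r, ?_, ?_, ?_⟩
  · simp only [Finset.mem_map, Function.Embedding.coe_subtype]
    rintro _ ⟨x, -, rfl⟩
    exact ⟨(hr x x.2).2.1, (hr x x.2).1⟩
  · exact hdisj.subset (by simp)
  · rw [Finset.sum_map]
    exact tsub_le_iff_right.1 hu.le

theorem addHaar_closedBall_eq_addHaar_ball_of_pos {E : Type*} [NormedAddCommGroup E]
    [NormedSpace ℝ E] [MeasurableSpace E] [BorelSpace E] [FiniteDimensional ℝ E] (μ : Measure E)
    [μ.IsAddHaarMeasure] (x : E) {r : ℝ} (hr : 0 < r) : μ (closedBall x r) = μ (ball x r) := by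
  rw [Measure.addHaar_closedBall _ _ hr.le, Measure.addHaar_ball_of_pos _ _ hr]

section Euclidean

variable {n : ℕ}

theorem GoodSet.of_convex {ω : Set (EuclideanSpace ℝ (Fin n))} (hb : Bornology.IsBounded ω)
    (ho : IsOpen ω) (hc : Convex ℝ ω) : GoodSet n ω :=
  ⟨hb, ho, hc.addHaar_frontier volume⟩

theorem goodSet_empty : GoodSet n (∅ : Set (EuclideanSpace ℝ (Fin n))) :=
  .of_convex Bornology.isBounded_empty isOpen_empty convex_empty

theorem goodSet_ball (x : EuclideanSpace ℝ (Fin n)) (r : ℝ) : GoodSet n (ball x r) :=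
  .of_convex isBounded_ball isOpen_ball (convex_ball x r)

theorem GoodSet.union {s t : Set (EuclideanSpace ℝ (Fin n))} (hs : GoodSet n s)
    (ht : GoodSet n t) : GoodSet n (s ∪ t) :=
  ⟨hs.1.union ht.1, hs.2.1.union ht.2.1,
    measure_mono_null (frontier_union_subset s t) <| measure_union_null
      (measure_mono_null Set.inter_subset_left hs.2.2)
      (measure_mono_null Set.inter_subset_right ht.2.2)⟩

theorem goodSet_biUnion {ι : Type*} {s : Finset ι} {B : ι → Set (EuclideanSpace ℝ (Fin n))}
    (h : ∀ i ∈ s, GoodSet n (B i)) : GoodSet n (⋃ i ∈ s, B i) := by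
  classical
  induction s using Finset.induction_on with
  | empty => simpa using goodSet_empty
  | insert a s _ ih =>
    rw [Finset.set_biUnion_insert]
    exact (h a (by simp)).union (ih fun i hi => h i (by simp [hi]))

theorem GoodSet.volume_closure {ω : Set (EuclideanSpace ℝ (Fin n))} (hω : GoodSet n ω) :
    volume (closure ω) = volume ω := by
  refine le_antisymm ?_ (measure_mono subset_closure)
  rw [closure_eq_self_union_frontier]
  exact (measure_union_le _ _).trans (by simp [hω.2.2])

def unitCube (n : ℕ) : Set (EuclideanSpace ℝ (Fin n)) :=
  {x | ∀ i, x i ∈ Set.Ioo (-(1 : ℝ) / 2) (1 / 2)}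

theorem unitCube_eq_preimage_ofLp :
    unitCube n = WithLp.ofLp ⁻¹' Set.univ.pi fun _ => Set.Ioo (-(1 : ℝ) / 2) (1 / 2) := by
  ext x
  simp [unitCube]

theorem goodSet_unitCube : GoodSet n (unitCube n) := by
  rw [unitCube_eq_preimage_ofLp]
  refine .of_convex ?_ ?_ ?_
  · exact (PiLp.antilipschitzWith_ofLp 2 _).isBounded_preimage
      (Bornology.IsBounded.pi fun _ => Metric.isBounded_Ioo _ _)
  · exact (isOpen_set_pi Set.finite_univ fun _ _ => isOpen_Ioo).preimage
      (PiLp.continuous_ofLp 2 _)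
  · exact (convex_pi fun _ _ => convex_Ioo _ _).linear_preimage
      (WithLp.linearEquiv 2 ℝ _).toLinearMap

theorem volume_unitCube : volume (unitCube n) = 1 := by
  rw [unitCube_eq_preimage_ofLp, (PiLp.volume_preserving_ofLp (Fin n)).measure_preimage
    (MeasurableSet.univ_pi fun _ => measurableSet_Ioo).nullMeasurableSet, volume_pi_pi]
  norm_num

structure IsHomogeneousContent (n : ℕ) (F : Set (EuclideanSpace ℝ (Fin n)) → ℝ) : Prop where
  nonneg : ∀ ω, GoodSet n ω → 0 ≤ F ω
  image_add_left : ∀ ω, GoodSet n ω → ∀ x : EuclideanSpace ℝ (Fin n),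
    F ((fun y => x + y) '' ω) = F ω
  mono : ∀ ω₁ ω₂, GoodSet n ω₁ → GoodSet n ω₂ → ω₁ ⊆ ω₂ → F ω₁ ≤ F ω₂
  add_le_union : ∀ ω₁ ω₂, GoodSet n ω₁ → GoodSet n ω₂ → Disjoint ω₁ ω₂ →
    F ω₁ + F ω₂ ≤ F (ω₁ ∪ ω₂)
  smul : ∀ ω, GoodSet n ω → ∀ α : ℝ, 0 < α → F (α • ω) = α ^ n * F ω

noncomputable def ballDensity (F : Set (EuclideanSpace ℝ (Fin n)) → ℝ) : ℝ :=
  F (ball 0 1) / volume.real (ball (0 : EuclideanSpace ℝ (Fin n)) 1)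

namespace IsHomogeneousContent

variable {F : Set (EuclideanSpace ℝ (Fin n)) → ℝ}

theorem ballDensity_nonneg (hF : IsHomogeneousContent n F) : 0 ≤ ballDensity F :=
  div_nonneg (hF.nonneg _ (goodSet_ball 0 1)) measureReal_nonneg

theorem apply_ball (hF : IsHomogeneousContent n F) (x : EuclideanSpace ℝ (Fin n)) {r : ℝ}
    (hr : 0 < r) : F (ball x r) = ballDensity F * volume.real (ball x r) := by
  have hball : ball x r = (fun y => x + y) '' (r • ball 0 1) := by
    simp [smul_unitBall_of_pos hr, Set.image_add_left]
  have hvol : volume.real (ball x r)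
      = r ^ n * volume.real (ball (0 : EuclideanSpace ℝ (Fin n)) 1) := by
    rw [measureReal_def, Measure.addHaar_ball_of_pos _ _ hr, ENNReal.toReal_mul,
      ENNReal.toReal_ofReal (by positivity), finrank_euclideanSpace_fin, measureReal_def]
  have hv : volume.real (ball (0 : EuclideanSpace ℝ (Fin n)) 1) ≠ 0 :=
    (ENNReal.toReal_pos (measure_ball_pos _ _ one_pos).ne' (by finiteness)).ne'
  calc F (ball x r) = F ((fun y => x + y) '' (r • ball 0 1)) := by rw [hball]
    _ = r ^ n * F (ball 0 1) := by
        rw [hF.image_add_left _ (by rw [smul_unitBall_of_pos hr]; exact goodSet_ball 0 r),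
          hF.smul _ (goodSet_ball 0 1) r hr]
    _ = ballDensity F * volume.real (ball x r) := by
        rw [hvol, ballDensity]
        field_simp

theorem sum_le_apply_biUnion (hF : IsHomogeneousContent n F) {ι : Type*} {s : Finset ι}
    {B : ι → Set (EuclideanSpace ℝ (Fin n))} (hB : ∀ i ∈ s, GoodSet n (B i))
    (hdisj : (s : Set ι).PairwiseDisjoint B) : ∑ i ∈ s, F (B i) ≤ F (⋃ i ∈ s, B i) := by
  classical
  induction s using Finset.induction_on with
  | empty => simpa using hF.nonneg ∅ goodSet_empty
  | insert a s ha ih =>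
    have hB' : ∀ i ∈ s, GoodSet n (B i) := fun i hi => hB i (by simp [hi])
    rw [Finset.sum_insert ha, Finset.set_biUnion_insert]
    calc F (B a) + ∑ i ∈ s, F (B i) ≤ F (B a) + F (⋃ i ∈ s, B i) := by
          gcongr
          exact ih hB' (hdisj.subset (by simp))
      _ ≤ F (B a ∪ ⋃ i ∈ s, B i) :=
          hF.add_le_union _ _ (hB a (by simp)) (goodSet_biUnion hB') <|
            Set.disjoint_iUnion₂_right.2 fun i hi =>
              hdisj (by simp) (by simp [hi]) (ne_of_mem_of_not_mem hi ha).symm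

theorem exists_goodSet_subset_ballDensity_mul_le (hF : IsHomogeneousContent n F)
    {U : Set (EuclideanSpace ℝ (Fin n))} (hU : IsOpen U) (hUfin : volume U ≠ ∞) {ε : ℝ}
    (hε : 0 < ε) : ∃ A, GoodSet n A ∧ A ⊆ U ∧ ballDensity F * volume.real U ≤ F A + ε := by
  set κ := ballDensity F
  have hκ : 0 ≤ κ := hF.ballDensity_nonneg
  set δ := ε / (κ + 1)
  have hδ : 0 < δ := by positivity
  have hκδ : κ * δ ≤ ε := by
    rw [mul_div_assoc', div_le_iff₀ (by positivity)]
    nlinarith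
  obtain ⟨s, r, hsU, hdisj, hcover⟩ := exists_finset_disjoint_closedBall_measure_le_sum_add
    volume hU hUfin (ENNReal.ofReal_pos.2 hδ).ne'
  set A := ⋃ x ∈ s, ball x (r x)
  have hAU : A ⊆ U := Set.iUnion₂_subset fun x hx => ball_subset_closedBall.trans (hsU x hx).2
  have hdisj' : (s : Set _).PairwiseDisjoint fun x => ball x (r x) :=
    hdisj.mono fun _ => ball_subset_closedBall
  have hvolA : volume.real U ≤ volume.real A + δ := by
    have hle : volume U ≤ volume A + ENNReal.ofReal δ := by
      rwa [measure_biUnion_finset hdisj' fun _ _ => measurableSet_ball,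
        ← Finset.sum_congr rfl fun x hx =>
          addHaar_closedBall_eq_addHaar_ball_of_pos volume x (hsU x hx).1]
    simpa [hδ.le, measureReal_def] using ENNReal.toReal_le_add hle
      (measure_ne_top_of_subset hAU hUfin) ENNReal.ofReal_ne_top
  have hFA : κ * volume.real A ≤ F A := by
    rw [measureReal_biUnion_finset hdisj' fun _ _ => measurableSet_ball, Finset.mul_sum]
    refine le_of_eq_of_le (Finset.sum_congr rfl fun x hx => (hF.apply_ball x (hsU x hx).1).symm) ?_
    exact hF.sum_le_apply_biUnion (fun x _ => goodSet_ball _ _) hdisj'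
  refine ⟨A, goodSet_biUnion fun x _ => goodSet_ball _ _, hAU, ?_⟩
  calc κ * volume.real U ≤ κ * volume.real A + κ * δ := by
        rw [← mul_add]
        gcongr
    _ ≤ F A + ε := add_le_add hFA hκδ

theorem ballDensity_mul_le (hF : IsHomogeneousContent n F) {ω : Set (EuclideanSpace ℝ (Fin n))}
    (hω : GoodSet n ω) : ballDensity F * volume.real ω ≤ F ω := by
  refine le_of_forall_pos_le_add fun ε hε => ?_
  obtain ⟨A, hA, hAω, hle⟩ :=
    hF.exists_goodSet_subset_ballDensity_mul_le hω.2.1 hω.1.measure_lt_top.ne hε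
  exact hle.trans (by gcongr; exact hF.mono _ _ hA hω hAω)

theorem le_ballDensity_mul (hF : IsHomogeneousContent n F) {ω : Set (EuclideanSpace ℝ (Fin n))}
    (hω : GoodSet n ω) : F ω ≤ ballDensity F * volume.real ω := by
  obtain ⟨M, hM0, hωM⟩ := hω.1.closure.subset_ball_lt 0 (0 : EuclideanSpace ℝ (Fin n))
  set B := ball (0 : EuclideanSpace ℝ (Fin n)) M
  set U := B \ closure ω
  have hUfin : volume U ≠ ∞ := measure_ne_top_of_subset Set.sdiff_subset measure_ball_lt_top.ne
  have hvol : volume.real B ≤ volume.real U + volume.real ω := by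
    refine ENNReal.toReal_le_add ?_ hUfin hω.1.measure_lt_top.ne
    calc volume B ≤ volume (U ∪ closure ω) := measure_mono (by simp [U])
      _ ≤ volume U + volume (closure ω) := measure_union_le _ _
      _ = volume U + volume ω := by rw [hω.volume_closure]
  refine le_of_forall_pos_le_add fun ε hε => ?_
  obtain ⟨A, hA, hAU, hle⟩ :=
    hF.exists_goodSet_subset_ballDensity_mul_le (isOpen_ball.sdiff isClosed_closure) hUfin hε
  have hωA : Disjoint ω A := Set.disjoint_sdiff_right.mono subset_closure hAU
  calc F ω ≤ F (ω ∪ A) - F A := by linarith [hF.add_le_union _ _ hω hA hωA]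
    _ ≤ F B - F A := by
        gcongr
        exact hF.mono _ _ (hω.union hA) (goodSet_ball 0 M)
          (Set.union_subset (subset_closure.trans hωM) (hAU.trans Set.sdiff_subset))
    _ = ballDensity F * volume.real B - F A := by rw [hF.apply_ball 0 hM0]
    _ ≤ ballDensity F * (volume.real U + volume.real ω) - F A := by
        gcongr
        exact hF.ballDensity_nonneg
    _ ≤ ballDensity F * volume.real ω + ε := by linarith

theorem apply_eq_ballDensity_mul (hF : IsHomogeneousContent n F)
    {ω : Set (EuclideanSpace ℝ (Fin n))} (hω : GoodSet n ω) :
    F ω = ballDensity F * volume.real ω :=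
  (hF.le_ballDensity_mul hω).antisymm (hF.ballDensity_mul_le hω)

end IsHomogeneousContent

end Euclidean

theorem stmt12 (n : ℕ) (F : Set (EuclideanSpace ℝ (Fin n)) → ℝ)
    (hF0 : ∀ ω, GoodSet n ω → 0 ≤ F ω)
    (htrans : ∀ ω, GoodSet n ω → ∀ x : EuclideanSpace ℝ (Fin n),
      F ((fun y => x + y) '' ω) = F ω)
    (hmono : ∀ ω₁ ω₂, GoodSet n ω₁ → GoodSet n ω₂ → ω₁ ⊆ ω₂ → F ω₁ ≤ F ω₂)
    (hsuper : ∀ ω₁ ω₂, GoodSet n ω₁ → GoodSet n ω₂ → Disjoint ω₁ ω₂ →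
      F ω₁ + F ω₂ ≤ F (ω₁ ∪ ω₂))
    (hscale : ∀ ω, GoodSet n ω → ∀ α : ℝ, 0 < α → F (α • ω) = α ^ n * F ω)
    (ω : Set (EuclideanSpace ℝ (Fin n))) (hω : GoodSet n ω) :
    F ω = (volume ω).toReal *
      F {x : EuclideanSpace ℝ (Fin n) | ∀ i, x i ∈ Set.Ioo (-(1 : ℝ) / 2) (1 / 2)} := by
  have hF : IsHomogeneousContent n F := ⟨hF0, htrans, hmono, hsuper, hscale⟩
  have hcube : F (unitCube n) = ballDensity F := by
    rw [hF.apply_eq_ballDensity_mul goodSet_unitCube, measureReal_def, volume_unitCube,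
      ENNReal.toReal_one, mul_one]
  change F ω = _ * F (unitCube n)
  rw [hcube, hF.apply_eq_ballDensity_mul hω, measureReal_def, mul_comm]
end

section
/- Let ρ_h ∈ L¹(Q_{x₀,δ}) be nonnegative and u_h ∈ W^{2,2}(Q_{x₀,δ}; ℝ^d). If λ_h ≤ 0 satisfies ∫ max{λ_h + |∇²u_h|, 0} dx = ∫ ρ_h dx over Q_{x₀,δ}, then ∫_{Q_{x₀,δ}} (1/ε)W(∇u_h) + ε|∇²u_h|² + ε(ρ_h − |∇²u_h|)² dx ≥ ∫_{Q_{x₀,δ}} (1/ε)W(∇u_h) + ε|∇²u_h|² + ε min{λ_h², |∇²u_h|²} dx. -/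
/-!
Write `t = max (λ + w) 0` for the truncation of `w = |∇²u|` by the multiplier `λ ≤ 0`. Since
`t - w = max λ (-w)`, one has `(t - w)² = min (λ², w²)`, so it suffices to show that among
nonnegative densities `ρ` of the same mass as `t`, the truncation `t` minimizes `∫ (ρ - w)²`.
This is a first-order (Lagrange multiplier) argument: pointwise
`(ρ - w)² ≥ min (λ², w²) + 2λ (ρ - t)`, and the last term integrates to zero by the mass constraint.
-/

open MeasureTheory

/-- The open cube of center `x₀` and half-side `δ`. -/
def openCube (N : ℕ) (x₀ : EuclideanSpace ℝ (Fin N)) (δ : ℝ) :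
    Set (EuclideanSpace ℝ (Fin N)) :=
  {x | ∀ i, x i ∈ Set.Ioo (x₀ i - δ) (x₀ i + δ)}

theorem volume_openCube_lt_top (N : ℕ) (x₀ : EuclideanSpace ℝ (Fin N)) (δ : ℝ) :
    volume (openCube N x₀ δ) < ⊤ := by
  have hcube : openCube N x₀ δ =
      WithLp.ofLp ⁻¹' Set.univ.pi fun i => Set.Ioo (x₀ i - δ) (x₀ i + δ) := by
    ext; simp [openCube]
  rw [hcube, (PiLp.volume_preserving_ofLp _).measure_preimage
    (MeasurableSet.univ_pi fun _ => measurableSet_Ioo).nullMeasurableSet, Real.volume_pi_Ioo]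
  exact ENNReal.prod_lt_top fun _ _ => ENNReal.ofReal_lt_top

instance isFiniteMeasure_restrict_openCube (N : ℕ) (x₀ : EuclideanSpace ℝ (Fin N)) (δ : ℝ) :
    IsFiniteMeasure (volume.restrict (openCube N x₀ δ)) :=
  isFiniteMeasure_restrict.2 (volume_openCube_lt_top N x₀ δ).ne

theorem min_sq_add_two_mul_sub_max_le_sq_sub {lam r : ℝ} (hlam : lam ≤ 0) (hr : 0 ≤ r) (w : ℝ) :
    min (lam ^ 2) (w ^ 2) + 2 * lam * (r - max (lam + w) 0) ≤ (r - w) ^ 2 := by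
  rcases le_or_gt 0 (lam + w) with h | h
  · rw [max_eq_left h, min_eq_left (by nlinarith)]
    nlinarith [sq_nonneg (r - w - lam)]
  · rw [max_eq_right h.le]
    nlinarith [min_le_right (lam ^ 2) (w ^ 2), mul_nonneg hr hr]

section Lintegral

variable {α : Type*} [MeasurableSpace α] {μ : Measure α}

theorem lintegral_min_sq_le_lintegral_sq_sub {w ρ : α → ℝ} {lam : ℝ} (hlam : lam ≤ 0)
    (hw : Integrable w μ) (hρ0 : ∀ x, 0 ≤ ρ x) (hρ : Integrable ρ μ)
    (hmass : ∫ x, max (lam + w x) 0 ∂μ = ∫ x, ρ x ∂μ) :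
    ∫⁻ x, ENNReal.ofReal (min (lam ^ 2) (w x ^ 2)) ∂μ ≤
      ∫⁻ x, ENNReal.ofReal ((ρ x - w x) ^ 2) ∂μ := by
  set c := ENNReal.ofReal (-2 * lam)
  have hc_fin : c ≠ ⊤ := ENNReal.ofReal_ne_top
  have ht : Integrable (fun x => max (lam + w x) 0) μ := by
    refine hw.mono ((hw.aestronglyMeasurable.const_add lam).sup aestronglyMeasurable_const)
      (ae_of_all _ fun x => ?_)
    rw [Real.norm_eq_abs, Real.norm_eq_abs, abs_of_nonneg (le_max_right _ _)]
    exact max_le (by linarith [le_abs_self (w x)]) (abs_nonneg _)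
  have hmass_lintegral :
      ∫⁻ x, ENNReal.ofReal (max (lam + w x) 0) ∂μ = ∫⁻ x, ENNReal.ofReal (ρ x) ∂μ := by
    rw [← ofReal_integral_eq_lintegral_ofReal ht (ae_of_all _ fun _ => le_max_right _ _),
      ← ofReal_integral_eq_lintegral_ofReal hρ (ae_of_all _ hρ0), hmass]
  have hpointwise : ∀ x,
      ENNReal.ofReal (min (lam ^ 2) (w x ^ 2)) + c * ENNReal.ofReal (max (lam + w x) 0) ≤
        ENNReal.ofReal ((ρ x - w x) ^ 2) + c * ENNReal.ofReal (ρ x) := by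
    intro x
    have hc : 0 ≤ -2 * lam := by linarith
    rw [← ENNReal.ofReal_mul hc, ← ENNReal.ofReal_mul hc,
      ← ENNReal.ofReal_add (le_min (sq_nonneg _) (sq_nonneg _))
        (mul_nonneg hc (le_max_right _ _)),
      ← ENNReal.ofReal_add (sq_nonneg _) (mul_nonneg hc (hρ0 x))]
    exact ENNReal.ofReal_le_ofReal
      (by linarith [min_sq_add_two_mul_sub_max_le_sq_sub hlam (hρ0 x) (w x)])
  have hρ_fin : ∫⁻ x, ENNReal.ofReal (ρ x) ∂μ ≠ ⊤ :=
    (lintegral_ofReal_ne_top_iff_integrable hρ.aestronglyMeasurable (ae_of_all _ hρ0)).2 hρ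
  refine ENNReal.le_of_add_le_add_right (ENNReal.mul_ne_top hc_fin hρ_fin) ?_
  calc ∫⁻ x, ENNReal.ofReal (min (lam ^ 2) (w x ^ 2)) ∂μ + c * ∫⁻ x, ENNReal.ofReal (ρ x) ∂μ
      = ∫⁻ x, ENNReal.ofReal (min (lam ^ 2) (w x ^ 2)) ∂μ +
          ∫⁻ x, c * ENNReal.ofReal (max (lam + w x) 0) ∂μ := by
        rw [lintegral_const_mul' _ _ hc_fin, hmass_lintegral]
    _ ≤ ∫⁻ x, ENNReal.ofReal (min (lam ^ 2) (w x ^ 2)) +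
          c * ENNReal.ofReal (max (lam + w x) 0) ∂μ := le_lintegral_add _ _
    _ ≤ ∫⁻ x, ENNReal.ofReal ((ρ x - w x) ^ 2) + c * ENNReal.ofReal (ρ x) ∂μ :=
        lintegral_mono hpointwise
    _ = ∫⁻ x, ENNReal.ofReal ((ρ x - w x) ^ 2) ∂μ + c * ∫⁻ x, ENNReal.ofReal (ρ x) ∂μ := by
        rw [lintegral_add_right' _ (hρ.aemeasurable.ennreal_ofReal.const_mul c),
          lintegral_const_mul' _ _ hc_fin]

theorem lintegral_ofReal_add_mul_le_of_lintegral_le {F A B : α → ℝ} {c : ℝ} (hc : 0 ≤ c)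
    (hF : ∀ x, 0 ≤ F x) (hA : ∀ x, 0 ≤ A x) (hB : ∀ x, 0 ≤ B x) (hBm : AEMeasurable B μ)
    (hBA : ∫⁻ x, ENNReal.ofReal (B x) ∂μ ≤ ∫⁻ x, ENNReal.ofReal (A x) ∂μ) :
    ∫⁻ x, ENNReal.ofReal (F x + c * B x) ∂μ ≤ ∫⁻ x, ENNReal.ofReal (F x + c * A x) ∂μ := by
  have hsplit : ∀ {G : α → ℝ}, (∀ x, 0 ≤ G x) → ∀ x,
      ENNReal.ofReal (F x + c * G x) =
        ENNReal.ofReal (F x) + ENNReal.ofReal c * ENNReal.ofReal (G x) :=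
    fun hG x => by rw [ENNReal.ofReal_add (hF x) (mul_nonneg hc (hG x)), ENNReal.ofReal_mul hc]
  simp only [hsplit hA, hsplit hB]
  calc ∫⁻ x, ENNReal.ofReal (F x) + ENNReal.ofReal c * ENNReal.ofReal (B x) ∂μ
      = ∫⁻ x, ENNReal.ofReal (F x) ∂μ + ENNReal.ofReal c * ∫⁻ x, ENNReal.ofReal (B x) ∂μ := by
        rw [lintegral_add_right' _ (hBm.ennreal_ofReal.const_mul _),
          lintegral_const_mul' _ _ ENNReal.ofReal_ne_top]
    _ ≤ ∫⁻ x, ENNReal.ofReal (F x) ∂μ + ENNReal.ofReal c * ∫⁻ x, ENNReal.ofReal (A x) ∂μ := by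
        gcongr
    _ ≤ ∫⁻ x, ENNReal.ofReal (F x) + ENNReal.ofReal c * ENNReal.ofReal (A x) ∂μ := by
        rw [← lintegral_const_mul' _ _ ENNReal.ofReal_ne_top]
        exact le_lintegral_add _ _

end Lintegral

theorem stmt17_general (N d : ℕ) (x₀ : EuclideanSpace ℝ (Fin N)) (δ : ℝ)
    (W : (EuclideanSpace ℝ (Fin N) →L[ℝ] EuclideanSpace ℝ (Fin d)) → ℝ)
    (hW0 : ∀ ξ, 0 ≤ W ξ)
    (ε : ℝ) (hε : 0 < ε)
    (u : EuclideanSpace ℝ (Fin N) → EuclideanSpace ℝ (Fin d))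
    (hL2 : MemLp (fun x => ‖iteratedFDeriv ℝ 2 u x‖) 2
      (volume.restrict (openCube N x₀ δ)))
    (ρ : EuclideanSpace ℝ (Fin N) → ℝ) (hρ0 : ∀ x, 0 ≤ ρ x)
    (hρint : Integrable ρ (volume.restrict (openCube N x₀ δ)))
    (lam : ℝ) (hlam : lam ≤ 0)
    (hmass : ∫ x in openCube N x₀ δ, max (lam + ‖iteratedFDeriv ℝ 2 u x‖) 0 =
      ∫ x in openCube N x₀ δ, ρ x) :
    ∫⁻ x in openCube N x₀ δ, ENNReal.ofReal
        ((1 / ε) * W (fderiv ℝ u x) + ε * ‖iteratedFDeriv ℝ 2 u x‖ ^ 2 +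
          ε * (ρ x - ‖iteratedFDeriv ℝ 2 u x‖) ^ 2) ≥
      ∫⁻ x in openCube N x₀ δ, ENNReal.ofReal
        ((1 / ε) * W (fderiv ℝ u x) + ε * ‖iteratedFDeriv ℝ 2 u x‖ ^ 2 +
          ε * min (lam ^ 2) (‖iteratedFDeriv ℝ 2 u x‖ ^ 2)) := by
  have hw := hL2.integrable one_le_two
  exact lintegral_ofReal_add_mul_le_of_lintegral_le hε.le
    (fun x => add_nonneg (mul_nonneg (one_div_nonneg.2 hε.le) (hW0 _)) (by positivity))
    (fun x => sq_nonneg _) (fun x => le_min (sq_nonneg _) (sq_nonneg _))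
    (aemeasurable_const.min (hw.aemeasurable.pow_const 2))
    (lintegral_min_sq_le_lintegral_sq_sub hlam hw hρ0 hρint hmass)

theorem stmt17 (N d : ℕ) (x₀ : EuclideanSpace ℝ (Fin N)) (δ : ℝ) (hδ : 0 < δ)
    (W : (EuclideanSpace ℝ (Fin N) →L[ℝ] EuclideanSpace ℝ (Fin d)) → ℝ)
    (hW0 : ∀ ξ, 0 ≤ W ξ) (hWcont : Continuous W)
    (ε : ℝ) (hε : 0 < ε)
    (u : EuclideanSpace ℝ (Fin N) → EuclideanSpace ℝ (Fin d))
    (hu : ContDiff ℝ 2 u)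
    (hL2 : MemLp (fun x => ‖iteratedFDeriv ℝ 2 u x‖) 2
      (volume.restrict (openCube N x₀ δ)))
    (ρ : EuclideanSpace ℝ (Fin N) → ℝ) (hρ0 : ∀ x, 0 ≤ ρ x)
    (hρint : Integrable ρ (volume.restrict (openCube N x₀ δ)))
    (lam : ℝ) (hlam : lam ≤ 0)
    (hmass : ∫ x in openCube N x₀ δ, max (lam + ‖iteratedFDeriv ℝ 2 u x‖) 0 =
      ∫ x in openCube N x₀ δ, ρ x) :
    ∫⁻ x in openCube N x₀ δ, ENNReal.ofReal
        ((1 / ε) * W (fderiv ℝ u x) + ε * ‖iteratedFDeriv ℝ 2 u x‖ ^ 2 +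
          ε * (ρ x - ‖iteratedFDeriv ℝ 2 u x‖) ^ 2) ≥
      ∫⁻ x in openCube N x₀ δ, ENNReal.ofReal
        ((1 / ε) * W (fderiv ℝ u x) + ε * ‖iteratedFDeriv ℝ 2 u x‖ ^ 2 +
          ε * min (lam ^ 2) (‖iteratedFDeriv ℝ 2 u x‖ ^ 2)) :=
  stmt17_general N d x₀ δ W hW0 ε hε u hL2 ρ hρ0 hρint lam hlam hmass
end
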